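/- arXiv:2010.07206 — 2 statements merged into one kernel-verified Lean document; each statement's English description precedes it below -/
import Mathlib

section
/- Let (E,T,S,e) be a conditional expectation preserving system with E = 𝓔_S. Then 𝓘_S = R(L_S), i.e., the S-invariant elements of E are exactly the elements of the range of L_S. -/
open Finset

/- `E` is a Riesz space (real vector lattice). -/
variable {E : Type*} [AddCommGroup E] [Lattice E]
  [CovariantClass E E (· + ·) (· ≤ ·)] [Module ℝ E] [PosSMulMono ℝ E]

/-- A sequence `u` in `E` order converges to `l` if there is a sequence `p` decreasing to `0`
with `|u n - l| ≤ p n` for all `n`. -/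
def OrderConv (u : ℕ → E) (l : E) : Prop :=
  ∃ p : ℕ → E, Antitone p ∧ IsGLB (Set.range p) 0 ∧ ∀ n, |u n - l| ≤ p n

/-- `l` is the greatest lower bound of `A` relative to the subset `F`. -/
def IsGLBIn (F A : Set E) (l : E) : Prop :=
  (∀ a ∈ A, l ≤ a) ∧ ∀ b ∈ F, (∀ a ∈ A, b ≤ a) → b ≤ l

/-- `F` is Dedekind complete (in its induced order): every nonempty subset of `F`
bounded above in `F` has a supremum in `F`. -/
def DedekindCompleteIn (F : Set E) : Prop :=
  ∀ A : Set E, A ⊆ F → A.Nonempty → (∃ b ∈ F, ∀ a ∈ A, a ≤ b) →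
    ∃ s ∈ F, (∀ a ∈ A, a ≤ s) ∧ ∀ b ∈ F, (∀ a ∈ A, a ≤ b) → s ≤ b

/-- `u` is a weak order unit of (the Riesz subspace) `F`:  `u > 0` and the band generated by
`u` is everything, equivalently no nonzero positive element of `F` is disjoint from `u`. -/
def IsWeakOrderUnitIn (F : Set E) (u : E) : Prop :=
  0 < u ∧ ∀ f ∈ F, 0 ≤ f → f ⊓ u = 0 → f = 0

/-- Band projections on a Riesz space: the linear idempotents `P` with `0 ≤ P ≤ I`. -/
def IsBandProjection (P : E →ₗ[ℝ] E) : Prop :=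
  (∀ f, P (P f) = P f) ∧ ∀ f, 0 ≤ f → 0 ≤ P f ∧ P f ≤ f

/-- `L` (restricted to `F`) is a conditional expectation operator on `F`: a positive
order continuous linear projection whose range is a Dedekind complete Riesz subspace and
which maps weak order units to weak order units. -/
def IsCondExpOn (F : Set E) (L : E → E) : Prop :=
  (∀ f ∈ F, L f ∈ F) ∧
  (∀ f ∈ F, ∀ g ∈ F, L (f + g) = L f + L g) ∧
  (∀ r : ℝ, ∀ f ∈ F, L (r • f) = r • L f) ∧
  (∀ f ∈ F, 0 ≤ f → 0 ≤ L f) ∧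
  (∀ A : Set E, A ⊆ F → A.Nonempty → DirectedOn (· ≥ ·) A → IsGLBIn F A 0 →
      IsGLBIn F (L '' A) 0) ∧
  (∀ f ∈ F, L (L f) = L f) ∧
  (∀ f ∈ L '' F, ∀ g ∈ L '' F, f ⊔ g ∈ L '' F) ∧
  DedekindCompleteIn (L '' F) ∧
  (∀ u ∈ F, IsWeakOrderUnitIn F u → IsWeakOrderUnitIn F (L u))

/-- Order continuity of a positive operator: downward directed sets with infimum `0`
are mapped to sets with infimum `0`. -/
def OrderContinuousOp (S : E →ₗ[ℝ] E) : Prop :=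
  ∀ A : Set E, A.Nonempty → DirectedOn (· ≥ ·) A → IsGLB A 0 → IsGLB (S '' A) 0

/-- Riesz homomorphism: a linear map preserving the lattice operations. -/
def IsRieszHom (S : E →ₗ[ℝ] E) : Prop := ∀ f g, S (f ⊔ g) = S f ⊔ S g

/-- `(E,T,S,e)` is a conditional expectation preserving system: `E` is a Dedekind complete
Riesz space with weak order unit `e`, `T` a conditional expectation operator on `E` with
`Te = e`, and `S` an order continuous Riesz homomorphism with `Se = e` and `TSPe = TPe`
for every band projection `P` on `E`. -/
def IsCEPS (T S : E →ₗ[ℝ] E) (e : E) : Prop :=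
  DedekindCompleteIn (Set.univ : Set E) ∧
  IsWeakOrderUnitIn (Set.univ : Set E) e ∧
  IsCondExpOn Set.univ T ∧ T e = e ∧
  IsRieszHom S ∧ OrderContinuousOp S ∧ S e = e ∧
  ∀ P : E →ₗ[ℝ] E, IsBandProjection P → T (S (P e)) = T (P e)

/-- The Cesàro means `S_n f = (1/n) ∑_{k=0}^{n-1} S^k f`. -/
noncomputable def ces (S : E →ₗ[ℝ] E) (f : E) (n : ℕ) : E :=
  (n : ℝ)⁻¹ • ∑ k ∈ Finset.range n, (S ^ k) f

/-- The principal ideal `E_e` generated by `e`. -/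
def idealE (e : E) : Set E := {f : E | ∃ k : ℝ, 0 ≤ k ∧ |f| ≤ k • e}

/-- The system `(E,T,S,e)` is ergodic if `L_S f ∈ R(T)` for every `S`-invariant `f`
(where `L_S f` is any order limit of the Cesàro means of `f`). -/
def IsErgodic (T S : E →ₗ[ℝ] E) (e : E) : Prop :=
  ∀ f l : E, S f = f → OrderConv (ces S f) l → l ∈ Set.range T

lemma Antitone.isGLB_range_succ {β : Type*} [Preorder β] {p : ℕ → β} {a : β} (hp : Antitone p)
    (ha : IsGLB (Set.range p) a) : IsGLB (Set.range fun n => p (n + 1)) a :=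
  ⟨fun _ ⟨n, hn⟩ => hn ▸ ha.1 ⟨n + 1, rfl⟩,
    fun _ hb => ha.2 fun _ ⟨n, hn⟩ => hn ▸ (hb ⟨n, rfl⟩).trans (hp n.le_succ)⟩

section LatticeOrderedGroup

variable {α : Type*} [AddCommGroup α] [Lattice α] [AddLeftMono α]

lemma eq_zero_of_abs_nonpos {x : α} (h : |x| ≤ 0) : x = 0 :=
  le_antisymm (abs_le'.mp h).1 (neg_nonpos.mp (abs_le'.mp h).2)

lemma isGLB_range_add_of_antitone {p q : ℕ → α} (hp : Antitone p) (hq : Antitone q)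
    (hp0 : IsGLB (Set.range p) 0) (hq0 : IsGLB (Set.range q) 0) :
    IsGLB (Set.range fun n => p n + q n) 0 := by
  refine ⟨?_, fun b hb => ?_⟩
  · rintro _ ⟨n, rfl⟩
    exact add_nonneg (hp0.1 ⟨n, rfl⟩) (hq0.1 ⟨n, rfl⟩)
  · -- As both sequences decrease, `b ≤ p n + q m` for all `n, m`.
    have hbq : ∀ m, b ≤ q m := fun m => by
      refine sub_nonpos.mp (hp0.2 ?_)
      rintro _ ⟨n, rfl⟩
      rw [sub_le_iff_le_add]
      rcases le_total n m with hnm | hmn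
      · exact (hb ⟨m, rfl⟩).trans (add_le_add_left (hp hnm) _)
      · exact (hb ⟨n, rfl⟩).trans (add_le_add_right (hq hmn) _)
    exact hq0.2 (by rintro _ ⟨m, rfl⟩; exact hbq m)

lemma nonpos_of_forall_nsmul_le (hdc : DedekindCompleteIn (Set.univ : Set α)) {b d : α}
    (h : ∀ n : ℕ, n • b ≤ d) : b ≤ 0 := by
  obtain ⟨s, -, hub, hlub⟩ := hdc (Set.range fun n : ℕ => n • b) (Set.subset_univ _)
    (Set.range_nonempty _) ⟨d, trivial, by rintro _ ⟨n, rfl⟩; exact h n⟩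
  have hs : s ≤ s - b := hlub _ trivial <| by
    rintro _ ⟨n, rfl⟩
    exact le_sub_iff_add_le.mpr (succ_nsmul b n ▸ hub _ ⟨n + 1, rfl⟩)
  simpa using hs

end LatticeOrderedGroup

section RieszSpace

variable {α : Type*} [AddCommGroup α] [Lattice α] [AddLeftMono α] [Module ℝ α] [PosSMulMono ℝ α]

lemma isGLB_range_inv_succ_smul (hdc : DedekindCompleteIn (Set.univ : Set α)) {d : α}
    (hd : 0 ≤ d) : IsGLB (Set.range fun n : ℕ => ((n : ℝ) + 1)⁻¹ • d) 0 := by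
  refine ⟨fun _ ⟨n, hn⟩ => hn ▸ smul_nonneg (by positivity) hd, fun b hb => ?_⟩
  refine nonpos_of_forall_nsmul_le hdc (d := d) fun n => ?_
  rcases n with _ | n
  · simpa using hd
  · have h := smul_le_smul_of_nonneg_left (hb ⟨n, rfl⟩) (by positivity : (0 : ℝ) ≤ n + 1)
    rwa [smul_inv_smul₀ (by positivity), ← Nat.cast_succ, Nat.cast_smul_eq_nsmul] at h

end RieszSpace

namespace IsRieszHom

variable {α : Type*} [AddCommGroup α] [Lattice α] [Module ℝ α] {S : α →ₗ[ℝ] α}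

lemma monotone (hS : IsRieszHom S) : Monotone S := fun a b hab =>
  sup_eq_right.mp (by rw [← hS, sup_eq_right.mpr hab])

lemma map_abs (hS : IsRieszHom S) (x : α) : S |x| = |S x| := by
  change S (x ⊔ -x) = S x ⊔ -S x
  rw [hS, map_neg]

end IsRieszHom

namespace OrderConv

variable {α : Type*} [AddCommGroup α] [Lattice α] {u v : ℕ → α} {l m : α}

lemma comp_succ (hu : OrderConv u l) : OrderConv (fun n => u (n + 1)) l := by
  obtain ⟨p, hpa, hp0, hp⟩ := hu
  exact ⟨fun n => p (n + 1), fun _ _ h => hpa (by omega), hpa.isGLB_range_succ hp0,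
    fun n => hp (n + 1)⟩

lemma map [Module ℝ α] {S : α →ₗ[ℝ] α} (hS : IsRieszHom S) (hSc : OrderContinuousOp S)
    (hu : OrderConv u l) : OrderConv (fun n => S (u n)) (S l) := by
  obtain ⟨p, hpa, hp0, hp⟩ := hu
  refine ⟨fun n => S (p n), hS.monotone.comp_antitone hpa, ?_, fun n => ?_⟩
  · rw [Set.range_comp']
    exact hSc _ (Set.range_nonempty p) (directedOn_range.mpr hpa.directed_ge) hp0
  · rw [← map_sub, ← hS.map_abs]
    exact hS.monotone (hp n)

section LatticeOrderedGroup

variable [AddLeftMono α]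

lemma const (l : α) : OrderConv (fun _ => l) l :=
  ⟨0, antitone_const, by simp, fun _ => by simp⟩

lemma unique (hl : OrderConv u l) (hm : OrderConv u m) : l = m := by
  obtain ⟨p, hpa, hp0, hp⟩ := hl
  obtain ⟨q, hqa, hq0, hq⟩ := hm
  refine (sub_eq_zero.mp (eq_zero_of_abs_nonpos ?_)).symm
  refine (isGLB_range_add_of_antitone hpa hqa hp0 hq0).2 ?_
  rintro _ ⟨n, rfl⟩
  calc |m - l| = |(u n - l) + (m - u n)| := by rw [add_comm, sub_add_sub_cancel]
    _ ≤ |u n - l| + |m - u n| := abs_add_le _ _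
    _ ≤ p n + q n := add_le_add (hp n) (abs_sub_comm m (u n) ▸ hq n)

lemma add (hu : OrderConv u l) (hv : OrderConv v m) :
    OrderConv (fun n => u n + v n) (l + m) := by
  obtain ⟨p, hpa, hp0, hp⟩ := hu
  obtain ⟨q, hqa, hq0, hq⟩ := hv
  refine ⟨fun n => p n + q n, hpa.add hqa, isGLB_range_add_of_antitone hpa hqa hp0 hq0,
    fun n => ?_⟩
  calc |u n + v n - (l + m)| = |(u n - l) + (v n - m)| := by rw [add_sub_add_comm]
    _ ≤ |u n - l| + |v n - m| := abs_add_le _ _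
    _ ≤ p n + q n := add_le_add (hp n) (hq n)

/-- Order convergent sequences are order bounded, so this is the Archimedean property. -/
lemma inv_succ_smul [Module ℝ α] [PosSMulMono ℝ α]
    (hdc : DedekindCompleteIn (Set.univ : Set α)) (hu : OrderConv u l) :
    OrderConv (fun n => ((n : ℝ) + 1)⁻¹ • u n) 0 := by
  obtain ⟨p, hpa, hp0, hp⟩ := hu
  set d := |l| + p 0
  have hbound : ∀ n, |u n| ≤ d := fun n =>
    calc |u n| = |(u n - l) + l| := by rw [sub_add_cancel]
      _ ≤ |u n - l| + |l| := abs_add_le _ _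
      _ ≤ p 0 + |l| := add_le_add_left ((hp n).trans (hpa n.zero_le)) _
      _ = d := add_comm _ _
  have hd : 0 ≤ d := (abs_nonneg _).trans (hbound 0)
  refine ⟨fun n => ((n : ℝ) + 1)⁻¹ • d, fun m n hmn => ?_, isGLB_range_inv_succ_smul hdc hd,
    fun n => ?_⟩
  · rw [← sub_nonneg, ← sub_smul]
    refine smul_nonneg (sub_nonneg.mpr (inv_anti₀ (by positivity) ?_)) hd
    exact_mod_cast Nat.succ_le_succ hmn
  · have hc : (0 : ℝ) ≤ ((n : ℝ) + 1)⁻¹ := by positivity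
    rw [sub_zero, abs_le', ← smul_neg]
    exact ⟨smul_le_smul_of_nonneg_left ((le_abs_self _).trans (hbound n)) hc,
      smul_le_smul_of_nonneg_left ((neg_le_abs _).trans (hbound n)) hc⟩

end LatticeOrderedGroup

end OrderConv

section Cesaro

variable {α : Type*} [AddCommGroup α] [Module ℝ α] (S : α →ₗ[ℝ] α) (f : α)

lemma ces_succ_of_map_eq (hf : S f = f) (n : ℕ) : ces S f (n + 1) = f := by
  have hpow : ∀ k, (S ^ k) f = f := fun k => by
    induction k with
    | zero => rfl
    | succ k ih => rw [pow_succ', Module.End.mul_apply, ih, hf]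
  rw [ces, sum_congr rfl fun k _ => hpow k, sum_const, card_range,
    ← Nat.cast_smul_eq_nsmul ℝ, inv_smul_smul₀ (by positivity)]

lemma natCast_smul_ces (n : ℕ) : (n : ℝ) • ces S f n = ∑ k ∈ range n, (S ^ k) f := by
  rcases n with _ | n
  · simp
  · rw [ces, smul_inv_smul₀ (by positivity)]

lemma map_ces_succ (n : ℕ) :
    S (ces S f (n + 1)) = ces S f (n + 2) + ((n : ℝ) + 1)⁻¹ • (ces S f (n + 2) - f) := by
  have hsum : S (∑ k ∈ range (n + 1), (S ^ k) f) = ∑ k ∈ range (n + 2), (S ^ k) f - f := by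
    rw [map_sum, sum_range_succ' _ (n + 1)]
    simp [pow_succ']
  rw [ces, map_smul, hsum, ← natCast_smul_ces]
  push_cast
  match_scalars <;> field_simp
  ring

end Cesaro

/-- Pass to the order limit on both sides of `map_ces_succ`. -/
lemma map_eq_self_of_orderConv_ces {α : Type*} [AddCommGroup α] [Lattice α] [AddLeftMono α]
    [Module ℝ α] [PosSMulMono ℝ α] (hdc : DedekindCompleteIn (Set.univ : Set α))
    {S : α →ₗ[ℝ] α} (hS : IsRieszHom S) (hSc : OrderContinuousOp S) {f g : α}
    (hg : OrderConv (ces S f) g) : S g = g := by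
  have hshift : OrderConv (fun n => ces S f (n + 2)) g := hg.comp_succ.comp_succ
  have hrhs := hshift.add ((hshift.add (OrderConv.const (-f))).inv_succ_smul hdc)
  simp only [← sub_eq_add_neg, add_zero, ← map_ces_succ] at hrhs
  exact (hg.comp_succ.map hS hSc).unique hrhs

/-- `L` is `L_S`, defined everywhere because `E = 𝓔_S`. -/
theorem invariants_eq_range_LS (T S : E →ₗ[ℝ] E) (e : E) (h : IsCEPS T S e)
    (L : E → E) (hL : ∀ f, OrderConv (ces S f) (L f)) :
    {f : E | S f = f} = Set.range L := by
  obtain ⟨hdc, -, -, -, hS, hSc, -, -⟩ := h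
  ext f
  constructor
  · intro hf
    refine ⟨f, (hL f).comp_succ.unique ?_⟩
    simpa only [ces_succ_of_map_eq S f hf] using OrderConv.const f
  · rintro ⟨g, rfl⟩
    exact map_eq_self_of_orderConv_ces hdc hS hSc (hL g)
end

section
/- Let (E,T,S,e) be a conditional expectation preserving system and f, g ∈ E_e. Then (1/n) Σ_{k=0}^{n−1} T((S^k f)·g) → Tf·Tg in order as n → ∞ if and only if T(L_S f · g) = Tf · Tg. -/
open Finset

/- `E` is a Riesz space (real vector lattice). -/
variable {E : Type*} [AddCommGroup E] [Lattice E]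
  [CovariantClass E E (· + ·) (· ≤ ·)] [Module ℝ E] [PosSMulMono ℝ E]

/-- `m` is the `f`-algebra multiplication on the principal ideal `E_e`:  commutative,
bilinear, positive, with unit `e`, determined on components by `Pe·Qe = PQe` for band
projections `P, Q`, and order continuous (so extendable from components by order limits). -/
def IsFAlgMulOn (e : E) (m : E → E → E) : Prop :=
  (∀ f ∈ idealE e, ∀ g ∈ idealE e, m f g ∈ idealE e) ∧
  (∀ f ∈ idealE e, ∀ g ∈ idealE e, m f g = m g f) ∧
  (∀ f ∈ idealE e, ∀ g ∈ idealE e, ∀ h ∈ idealE e, m (f + g) h = m f h + m g h) ∧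
  (∀ r : ℝ, ∀ f ∈ idealE e, ∀ g ∈ idealE e, m (r • f) g = r • m f g) ∧
  (∀ f ∈ idealE e, ∀ g ∈ idealE e, 0 ≤ f → 0 ≤ g → 0 ≤ m f g) ∧
  (∀ f ∈ idealE e, m e f = f) ∧
  (∀ P Q : E →ₗ[ℝ] E, IsBandProjection P → IsBandProjection Q → m (P e) (Q e) = P (Q e)) ∧
  (∀ g ∈ idealE e, 0 ≤ g → ∀ (u : ℕ → E) (l : E), (∀ n, u n ∈ idealE e) → l ∈ idealE e →
      OrderConv u l → OrderConv (fun n => m (u n) g) (m l g))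

/-! Bilinearity of the multiplication and linearity of `T` turn the averages
`(1/n) ∑ T((S^k f)·g)` into `T(S_n f · g)`. If `|f| ≤ κe`, the Riesz homomorphism `S` fixing `e`
keeps every `S^k f`, hence every `S_n f` and their order limit `L_S f`, within `κe`; so
multiplication by `g = g⁺ - g⁻` and then the positive order continuous `T` carry
`S_n f → L_S f` to `T(S_n f · g) → T(L_S f · g)`. Since order limits are unique, the averages
converge to `Tf·Tg` exactly when `T(L_S f · g) = Tf·Tg`. -/

section LatticeOrderedGroup

variable {α : Type*} [AddCommGroup α] [Lattice α]

theorem le_zero_of_isGLB_range {p : ℕ → α} (hp : IsGLB (Set.range p) 0) {b : α}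
    (hb : ∀ n, b ≤ p n) : b ≤ 0 :=
  hp.2 <| Set.forall_mem_range.2 hb

variable [AddLeftMono α]

theorem isGLB_range_add {p q : ℕ → α} (hp : Antitone p) (hq : Antitone q)
    (hp0 : IsGLB (Set.range p) 0) (hq0 : IsGLB (Set.range q) 0) :
    IsGLB (Set.range (p + q)) 0 := by
  refine ⟨Set.forall_mem_range.2 fun n => add_nonneg (hp0.1 ⟨n, rfl⟩) (hq0.1 ⟨n, rfl⟩),
    fun b hb => le_zero_of_isGLB_range hp0 fun n => ?_⟩
  suffices b - p n ≤ 0 from sub_nonpos.1 this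
  refine le_zero_of_isGLB_range hq0 fun k => sub_le_iff_le_add'.2 ?_
  calc b ≤ p (max n k) + q (max n k) := hb ⟨max n k, rfl⟩
    _ ≤ p n + q k := add_le_add (hp (le_max_left n k)) (hq (le_max_right n k))

theorem OrderConv.sub {u v : ℕ → α} {a b : α} (hu : OrderConv u a) (hv : OrderConv v b) :
    OrderConv (fun n => u n - v n) (a - b) := by
  obtain ⟨p, hp, hp0, hpu⟩ := hu
  obtain ⟨q, hq, hq0, hqv⟩ := hv
  refine ⟨p + q, hp.add hq, isGLB_range_add hp hq hp0 hq0, fun n => ?_⟩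
  calc |u n - v n - (a - b)| = |(u n - a) + -(v n - b)| := by abel_nf
    _ ≤ |u n - a| + |-(v n - b)| := abs_add_le _ _
    _ ≤ p n + q n := by rw [abs_neg]; exact add_le_add (hpu n) (hqv n)

theorem OrderConv.unique_s12 {u : ℕ → α} {a b : α} (ha : OrderConv u a) (hb : OrderConv u b) :
    a = b := by
  obtain ⟨r, -, hr0, hr⟩ := ha.sub hb
  have hab : |a - b| ≤ 0 :=
    le_zero_of_isGLB_range hr0 fun n => by simpa [abs_sub_comm] using hr n
  exact sub_eq_zero.1 <|
    le_antisymm ((le_abs_self _).trans hab) (neg_nonpos.1 ((neg_le_abs _).trans hab))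

theorem OrderConv.abs_le {u : ℕ → α} {a c : α} (h : OrderConv u a) (hc : ∀ n, |u n| ≤ c) :
    |a| ≤ c := by
  obtain ⟨p, -, hp0, hpu⟩ := h
  refine sub_nonpos.1 <| le_zero_of_isGLB_range hp0 fun n => sub_le_iff_le_add'.2 ?_
  calc |a| = |u n + -(u n - a)| := by abel_nf
    _ ≤ |u n| + |-(u n - a)| := abs_add_le _ _
    _ ≤ c + p n := by rw [abs_neg]; exact add_le_add (hc n) (hpu n)

theorem abs_sum_range_le {x : ℕ → α} {c : α} (hx : ∀ k, |x k| ≤ c) (n : ℕ) :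
    |∑ k ∈ range n, x k| ≤ n • c := by
  induction n with
  | zero => simp
  | succ n ih =>
    rw [sum_range_succ, succ_nsmul]
    exact (abs_add_le _ _).trans (add_le_add ih (hx n))

end LatticeOrderedGroup

section VectorLattice

variable {V : Type*} [AddCommGroup V] [Lattice V] [Module ℝ V]

theorem abs_smul_le_smul_abs [PosSMulMono ℝ V] {r : ℝ} (hr : 0 ≤ r) (x : V) :
    |r • x| ≤ r • |x| :=
  abs_le'.2 ⟨smul_le_smul_of_nonneg_left (le_abs_self x) hr,
    by rw [← smul_neg]; exact smul_le_smul_of_nonneg_left (neg_le_abs x) hr⟩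

theorem IsCondExpOn.map_nonneg {L : V → V} (hL : IsCondExpOn Set.univ L) (x : V)
    (hx : 0 ≤ x) : 0 ≤ L x :=
  let ⟨_, _, _, hpos, _⟩ := hL
  hpos x trivial hx

theorem IsCondExpOn.orderContinuousOp {T : V →ₗ[ℝ] V} (hT : IsCondExpOn Set.univ T) :
    OrderContinuousOp T := fun A hA hdir hA0 =>
  let ⟨_, _, _, _, hcont, _⟩ := hT
  have h := hcont A (Set.subset_univ A) hA hdir ⟨hA0.1, fun _ _ hb => hA0.2 hb⟩
  ⟨h.1, fun b hb => h.2 b trivial hb⟩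

theorem IsRieszHom.monotone_s12 {S : V →ₗ[ℝ] V} (hS : IsRieszHom S) : Monotone S :=
  fun a b hab => by rw [← sup_eq_right, ← hS, sup_eq_right.2 hab]

theorem IsRieszHom.map_abs_s12 {S : V →ₗ[ℝ] V} (hS : IsRieszHom S) (x : V) : |S x| = S |x| := by
  rw [abs, abs, hS, map_neg]

theorem IsRieszHom.abs_pow_apply_le {S : V →ₗ[ℝ] V} (hS : IsRieszHom S) {c x : V}
    (hc : S c = c) (hx : |x| ≤ c) (k : ℕ) : |(S ^ k) x| ≤ c := by
  induction k with
  | zero => simpa using hx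
  | succ k ih =>
    rw [pow_succ', Module.End.mul_apply, hS.map_abs_s12, ← hc]
    exact hS.monotone_s12 ih

variable [AddLeftMono V]

theorem monotone_of_map_nonneg {T : V →ₗ[ℝ] V} (hT : ∀ x, 0 ≤ x → 0 ≤ T x) : Monotone T :=
  fun a b hab => sub_nonneg.1 <| by simpa only [map_sub] using hT _ (sub_nonneg.2 hab)

theorem abs_map_le_map_abs {T : V →ₗ[ℝ] V} (hT : ∀ x, 0 ≤ x → 0 ≤ T x) (x : V) :
    |T x| ≤ T |x| :=
  abs_le'.2 ⟨monotone_of_map_nonneg hT (le_abs_self x),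
    by rw [← map_neg]; exact monotone_of_map_nonneg hT (neg_le_abs x)⟩

theorem OrderConv.map_s12 {T : V →ₗ[ℝ] V} (hT : ∀ x, 0 ≤ x → 0 ≤ T x) (hTc : OrderContinuousOp T)
    {u : ℕ → V} {a : V} (h : OrderConv u a) : OrderConv (fun n => T (u n)) (T a) := by
  obtain ⟨p, hp, hp0, hpu⟩ := h
  have hdir : DirectedOn (· ≥ ·) (Set.range p) := by
    rintro _ ⟨i, rfl⟩ _ ⟨j, rfl⟩
    exact ⟨p (max i j), ⟨max i j, rfl⟩, hp (le_max_left i j), hp (le_max_right i j)⟩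
  refine ⟨fun n => T (p n), (monotone_of_map_nonneg hT).comp_antitone hp, ?_, fun n => ?_⟩
  · simpa only [Set.range_comp'] using hTc _ (Set.range_nonempty p) hdir hp0
  · calc |T (u n) - T a| = |T (u n - a)| := by rw [map_sub]
      _ ≤ T |u n - a| := abs_map_le_map_abs hT _
      _ ≤ T (p n) := monotone_of_map_nonneg hT (hpu n)

theorem IsRieszHom.abs_ces_le [PosSMulMono ℝ V] {S : V →ₗ[ℝ] V} (hS : IsRieszHom S)
    {c x : V} (hc : S c = c) (hc0 : 0 ≤ c) (hx : |x| ≤ c) (n : ℕ) : |ces S x n| ≤ c := by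
  rcases n.eq_zero_or_pos with rfl | hn
  · simpa [ces] using hc0
  calc |ces S x n| ≤ (n : ℝ)⁻¹ • |∑ k ∈ range n, (S ^ k) x| :=
        abs_smul_le_smul_abs (by positivity) _
    _ ≤ (n : ℝ)⁻¹ • (n • c) :=
        smul_le_smul_of_nonneg_left (abs_sum_range_le (hS.abs_pow_apply_le hc hx) n)
          (by positivity)
    _ = c := by
        rw [← Nat.cast_smul_eq_nsmul ℝ, smul_smul, inv_mul_cancel₀ (by positivity), one_smul]

end VectorLattice

section PrincipalIdeal

variable {V : Type*} [AddCommGroup V] [Lattice V] [Module ℝ V] {e : V}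

theorem mem_idealE_of_abs_le {x y : V} (hxy : |x| ≤ |y|) (hy : y ∈ idealE e) :
    x ∈ idealE e :=
  let ⟨k, hk, hyk⟩ := hy
  ⟨k, hk, hxy.trans hyk⟩

theorem neg_mem_idealE {x : V} (hx : x ∈ idealE e) : -x ∈ idealE e :=
  mem_idealE_of_abs_le (abs_neg x).le hx

variable [AddLeftMono V]

theorem zero_mem_idealE : (0 : V) ∈ idealE e :=
  ⟨0, le_rfl, by simp⟩

theorem add_mem_idealE {x y : V} (hx : x ∈ idealE e) (hy : y ∈ idealE e) : x + y ∈ idealE e := by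
  obtain ⟨k, hk, hxk⟩ := hx
  obtain ⟨l, hl, hyl⟩ := hy
  exact ⟨k + l, add_nonneg hk hl,
    (abs_add_le x y).trans (by rw [add_smul]; exact add_le_add hxk hyl)⟩

theorem sum_mem_idealE {ι : Type*} {s : Finset ι} {x : ι → V} (hx : ∀ i ∈ s, x i ∈ idealE e) :
    ∑ i ∈ s, x i ∈ idealE e :=
  Finset.sum_induction x (· ∈ idealE e) (fun _ _ => add_mem_idealE) zero_mem_idealE hx

theorem posPart_mem_idealE {x : V} (hx : x ∈ idealE e) : x⁺ ∈ idealE e :=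
  mem_idealE_of_abs_le (by
    rw [abs_of_nonneg (posPart_nonneg x)]; exact sup_le (le_abs_self x) (abs_nonneg x)) hx

theorem negPart_mem_idealE {x : V} (hx : x ∈ idealE e) : x⁻ ∈ idealE e :=
  mem_idealE_of_abs_le (by
    rw [abs_of_nonneg (negPart_nonneg x)]; exact sup_le (neg_le_abs x) (abs_nonneg x)) hx

end PrincipalIdeal

namespace IsFAlgMulOn

variable {V : Type*} [AddCommGroup V] [Lattice V] [AddLeftMono V] [Module ℝ V]
  {e : V} {m : V → V → V}

theorem zero_left (hm : IsFAlgMulOn e m) {y : V} (hy : y ∈ idealE e) : m 0 y = 0 := by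
  obtain ⟨-, -, -, hsmul, -⟩ := hm
  simpa using hsmul 0 0 zero_mem_idealE y hy

theorem sum_left (hm : IsFAlgMulOn e m) {ι : Type*} (s : Finset ι) {x : ι → V}
    (hx : ∀ i, x i ∈ idealE e) {y : V} (hy : y ∈ idealE e) :
    m (∑ i ∈ s, x i) y = ∑ i ∈ s, m (x i) y := by
  have ⟨_, _, hadd, _⟩ := hm
  induction s using Finset.cons_induction with
  | empty => simpa using hm.zero_left hy
  | cons i s _ ih =>
    rw [sum_cons, sum_cons, hadd _ (hx i) _ (sum_mem_idealE fun j _ => hx j) y hy, ih]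

theorem smul_sum_left (hm : IsFAlgMulOn e m) (r : ℝ) {ι : Type*} (s : Finset ι) {x : ι → V}
    (hx : ∀ i, x i ∈ idealE e) {y : V} (hy : y ∈ idealE e) :
    m (r • ∑ i ∈ s, x i) y = r • ∑ i ∈ s, m (x i) y := by
  have ⟨_, _, _, hsmul, _⟩ := hm
  rw [hsmul r _ (sum_mem_idealE fun i _ => hx i) y hy, hm.sum_left s hx hy]

theorem sub_right (hm : IsFAlgMulOn e m) {x y z : V} (hx : x ∈ idealE e) (hy : y ∈ idealE e)
    (hz : z ∈ idealE e) : m x (y - z) = m x y - m x z := by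
  obtain ⟨-, hcomm, hadd, hsmul, -⟩ := hm
  have hnegz : m (-z) x = -m z x := by simpa only [neg_one_smul] using hsmul (-1) z hz x hx
  rw [sub_eq_add_neg, hcomm x hx _ (add_mem_idealE hy (neg_mem_idealE hz)),
    hadd y hy _ (neg_mem_idealE hz) x hx, hnegz, hcomm y hy x hx, hcomm z hz x hx,
    ← sub_eq_add_neg]

theorem orderConv_mul_right (hm : IsFAlgMulOn e m) {y : V} (hy : y ∈ idealE e)
    {u : ℕ → V} {a : V} (hu : ∀ n, u n ∈ idealE e) (ha : a ∈ idealE e) (h : OrderConv u a) :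
    OrderConv (fun n => m (u n) y) (m a y) := by
  -- order continuity of `m · y` is only assumed for `y ≥ 0`
  have hsplit : ∀ x ∈ idealE e, m x y = m x y⁺ - m x y⁻ := fun x hx => by
    rw [← hm.sub_right hx (posPart_mem_idealE hy) (negPart_mem_idealE hy), posPart_sub_negPart]
  obtain ⟨-, -, -, -, -, -, -, hcont⟩ := hm
  simp only [hsplit _ (hu _), hsplit a ha]
  exact (hcont _ (posPart_mem_idealE hy) (posPart_nonneg y) u a hu ha h).sub
    (hcont _ (negPart_mem_idealE hy) (negPart_nonneg y) u a hu ha h)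

end IsFAlgMulOn

/-- For `f, g ∈ E_e`:  `(1/n) ∑_{k=0}^{n-1} T((S^k f)·g) → Tf·Tg` in order iff
`T(L_S f · g) = Tf·Tg`. -/
theorem cesaro_T_mul_iff (T S : E →ₗ[ℝ] E) (e : E) (h : IsCEPS T S e)
    (m : E → E → E) (hm : IsFAlgMulOn e m)
    (f g : E) (hf : f ∈ idealE e) (hg : g ∈ idealE e)
    (l : E) (hl : OrderConv (ces S f) l) :
    OrderConv (fun n => (n : ℝ)⁻¹ • ∑ k ∈ Finset.range n, T (m ((S ^ k) f) g))
        (m (T f) (T g)) ↔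
      T (m l g) = m (T f) (T g) := by
  obtain ⟨-, he, hT, -, hS, -, hSe, -⟩ := h
  obtain ⟨κ, hκ, hfκ⟩ := hf
  have hSκe : S (κ • e) = κ • e := by rw [map_smul, hSe]
  have hces : ∀ n, |ces S f n| ≤ κ • e := hS.abs_ces_le hSκe (smul_nonneg hκ he.1.le) hfκ
  have hSkf : ∀ k, (S ^ k) f ∈ idealE e := fun k => ⟨κ, hκ, hS.abs_pow_apply_le hSκe hfκ k⟩
  have hmeans : (fun n : ℕ => (n : ℝ)⁻¹ • ∑ k ∈ range n, T (m ((S ^ k) f) g)) =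
      fun n => T (m (ces S f n) g) := funext fun n => by
    rw [ces, hm.smul_sum_left _ _ hSkf hg, map_smul, map_sum]
  have hconv : OrderConv (fun n => T (m (ces S f n) g)) (T (m l g)) :=
    OrderConv.map_s12 hT.map_nonneg hT.orderContinuousOp <|
      hm.orderConv_mul_right hg (fun n => ⟨κ, hκ, hces n⟩) ⟨κ, hκ, hl.abs_le hces⟩ hl
  rw [hmeans]
  exact ⟨hconv.unique_s12, fun hTlg => hTlg ▸ hconv⟩
end
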